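/- Let X be a finite-dimensional CAT(0) cube complex, w a hyperplane, and u a hyperplane with u ∉ I(w) but u in contact with w. Then either u is not transverse to w, or there exists a hyperplane t transverse to w such that u is not transverse to t. -/

import Mathlib

/-!
Suppose `u` is transverse to `w` through a square with edges `ab`, `cd` in `u` and `ac`, `bd` in
`w`, and let `v` be a vertex of the carrier of `w` outside the carrier of `u`, on the side of `a`.
The halfspace `S` of `u` containing `b` is convex, so the first edge `vx` of a geodesic from `v`
to a nearest point of `S` is dual to a hyperplane `t` with all of `S` on the side of `x`. As `v` is
not in the carrier of `u`, `t ≠ u`, so `t` cannot cross a square crossed by `u`: one of the two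
`t`-edges of that square would lie in `S`. Since `S` contains the `w`-edge `bd`, it meets both
sides of `w`; hence `x` is on the side of `v`, and the quadrangle condition at `v`, applied to `x`,
the `w`-neighbour of `v` and a vertex of `S` beyond `w`, closes a square crossed by `t` and `w`.
-/

open SimpleGraph

variable {V : Type*}

/-- A median graph: combinatorial model of (the 1-skeleton of) a CAT(0) cube complex. -/
def IsMedianGraph (G : SimpleGraph V) : Prop :=
  G.Connected ∧ ∀ x y z : V, ∃! m : V,
    G.dist x m + G.dist m y = G.dist x y ∧
    G.dist x m + G.dist m z = G.dist x z ∧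
    G.dist y m + G.dist m z = G.dist y z

/-- Djoković–Winkler relation on oriented edges of a median graph; hyperplanes are its classes. -/
def Theta (G : SimpleGraph V) (e f : V × V) : Prop :=
  G.dist e.1 f.1 + G.dist e.2 f.2 ≠ G.dist e.1 f.2 + G.dist e.2 f.1

/-- A hyperplane, identified with the set of (oriented) edges crossing it. -/
def IsHyperplane (G : SimpleGraph V) (h : Set (V × V)) : Prop :=
  ∃ e : V × V, G.Adj e.1 e.2 ∧ h = {f | G.Adj f.1 f.2 ∧ Theta G e f}

/-- The hyperplane `h` is adjacent to the vertex `v` (i.e. `v` lies in the carrier of `h`). -/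
def AdjTo (G : SimpleGraph V) (h : Set (V × V)) (v : V) : Prop :=
  ∃ e ∈ h, e.1 = v ∨ e.2 = v

/-- `Wv G v`: the set of hyperplanes adjacent to `v`. -/
def Wv (G : SimpleGraph V) (v : V) : Set (Set (V × V)) :=
  {h | IsHyperplane G h ∧ AdjTo G h v}

/-- Two hyperplanes are in contact if their carriers share a vertex. -/
def Contact (G : SimpleGraph V) (h h' : Set (V × V)) : Prop :=
  ∃ v : V, AdjTo G h v ∧ AdjTo G h' v

/-- Two hyperplanes are transverse if they cross a common square. -/
def Transverse (G : SimpleGraph V) (h h' : Set (V × V)) : Prop :=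
  ∃ a b c d : V, (a, b) ∈ h ∧ (c, d) ∈ h ∧ (a, c) ∈ h' ∧ (b, d) ∈ h' ∧
    G.Adj a b ∧ G.Adj c d ∧ G.Adj a c ∧ G.Adj b d

/-- A clique in the contact graph: a set of hyperplanes whose carriers pairwise intersect. -/
def IsContactClique (G : SimpleGraph V) (C : Set (Set (V × V))) : Prop :=
  (∀ h ∈ C, IsHyperplane G h) ∧ ∀ h ∈ C, ∀ h' ∈ C, h ≠ h' → Contact G h h'

/-- A maximal clique in the contact graph. -/
def IsMaxContactClique (G : SimpleGraph V) (C : Set (Set (V × V))) : Prop :=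
  IsContactClique G C ∧ ∀ C', IsContactClique G C' → C ⊆ C' → C' = C

/-- The link of `v` is a cone, i.e. `v` is an extremal vertex. -/
def LinkIsCone (G : SimpleGraph V) (v : V) : Prop :=
  ∃ h ∈ Wv G v, ∀ h' ∈ Wv G v, h' ≠ h → Transverse G h h'

/-- Uniform local finiteness. -/
def UnifLocFinite (G : SimpleGraph V) : Prop :=
  ∃ N : ℕ, ∀ v : V, (G.neighborSet v).Finite ∧ (G.neighborSet v).ncard ≤ N

abbrev Hyp (G : SimpleGraph V) := {h : Set (V × V) // IsHyperplane G h}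

/-- The contact graph `𝒞(X)`. -/
def contactGraph (G : SimpleGraph V) : SimpleGraph (Hyp G) where
  Adj h h' := h ≠ h' ∧ Contact G h.1 h'.1
  symm := by
    constructor
    rintro h h' ⟨hne, v, hv, hv'⟩
    exact ⟨hne.symm, v, hv', hv⟩
  loopless := by constructor; rintro h ⟨hne, -⟩; exact hne rfl

/-- `Ical G w` = I(w): the hyperplanes whose carrier contains the carrier of `w`,
i.e. the intersection of the sets `Wv G v` over all vertices `v` adjacent to `w`. -/
def Ical (G : SimpleGraph V) (w : Set (V × V)) : Set (Set (V × V)) :=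
  {u | IsHyperplane G u ∧ ∀ v : V, AdjTo G w v → AdjTo G u v}

/-- `Ical0 G w` = I⁰(w): the hyperplanes with the same carrier as `w`. -/
def Ical0 (G : SimpleGraph V) (w : Set (V × V)) : Set (Set (V × V)) :=
  {u | u ∈ Ical G w ∧ w ∈ Ical G u}

/-- The action of a cubical automorphism on sets of edges (e.g. hyperplanes). -/
def hmap (G : SimpleGraph V) (φ : G ≃g G) (h : Set (V × V)) : Set (V × V) :=
  (fun e : V × V => (φ e.1, φ e.2)) '' h

/-- `π` is the vertex permutation induced by the contact-graph automorphism `ψ` via the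
correspondence between vertices and maximal cliques (`ρ(ψ) = π`). -/
def InducesPerm (G : SimpleGraph V) (ψ : contactGraph G ≃g contactGraph G)
    (π : Equiv.Perm V) : Prop :=
  ∀ (v : V) (h : Hyp G), h.1 ∈ Wv G v ↔ (ψ h).1 ∈ Wv G (π v)

/-- The hyperplane `u` is adjacent, inside the cube complex structure of a hyperplane `w`,
to the vertex of `w` given by the edge `e ∈ w`: `u` crosses a square containing `e`. -/
def HypAdjEdge (G : SimpleGraph V) (u : Set (V × V)) (e : V × V) : Prop :=
  ∃ c d : V, (e.1, c) ∈ u ∧ (e.2, d) ∈ u ∧ G.Adj c d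

/-- The link, in the cube complex structure of hyperplane `w`, of the vertex given by
`e ∈ w` is a cone (i.e. this vertex of `w` is extremal). -/
def HypLinkCone (G : SimpleGraph V) (w : Set (V × V)) (e : V × V) : Prop :=
  ∃ u, IsHyperplane G u ∧ u ≠ w ∧ HypAdjEdge G u e ∧
    ∀ u', IsHyperplane G u' → u' ≠ w → HypAdjEdge G u' e → u' ≠ u → Transverse G u u'

/-- No hyperplane of `X` has an extremal vertex. -/
def NoHypExtremalVertex (G : SimpleGraph V) : Prop :=
  ∀ w, IsHyperplane G w → ∀ e ∈ w, ¬ HypLinkCone G w e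

namespace SimpleGraph

variable {G : SimpleGraph V} {u v : V}

theorem Connected.exists_adj_dist_add_one (hconn : G.Connected) (huv : u ≠ v) :
    ∃ u', G.Adj u u' ∧ G.dist u' v + 1 = G.dist u v := by
  obtain ⟨p, hp⟩ := hconn.exists_walk_length_eq_dist u v
  cases p with
  | nil => exact absurd rfl huv
  | @cons _ u' _ hadj q =>
    refine ⟨u', hadj, le_antisymm ?_ ?_⟩
    · simpa [← hp] using dist_le q
    · simpa [dist_eq_one_iff_adj.mpr hadj, add_comm] using
        hconn.dist_triangle (u := u) (v := u') (w := v)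

def IsMedian (G : SimpleGraph V) (a b c m : V) : Prop :=
  G.dist a m + G.dist m b = G.dist a b ∧ G.dist a m + G.dist m c = G.dist a c ∧
    G.dist b m + G.dist m c = G.dist b c

/-- For an edge `xy` of a median graph, the halfspace of the hyperplane dual to `xy` that
contains `x`. -/
def halfspace (G : SimpleGraph V) (x y : V) : Set V :=
  {z | G.dist z y = G.dist z x + 1}

def edgeHyperplane (G : SimpleGraph V) (e : V × V) : Set (V × V) :=
  {f | G.Adj f.1 f.2 ∧ Theta G e f}

def IsConvex (G : SimpleGraph V) (S : Set V) : Prop :=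
  ∀ a ∈ S, ∀ b ∈ S, ∀ m, G.dist a m + G.dist m b = G.dist a b → m ∈ S

theorem IsMedian.of_adj {a a' b b' c m : V} (hconn : G.Connected) (hm : G.IsMedian a' b' c m)
    (ha : G.Adj a a') (hb : G.Adj b b') (hab : G.dist a b = G.dist a' b' + 2)
    (ha' : G.dist a' c + 1 = G.dist a c) (hb' : G.dist b' c + 1 = G.dist b c) :
    G.IsMedian a b c m := by
  obtain ⟨hm₁, hm₂, hm₃⟩ := hm
  have := dist_eq_one_iff_adj.mpr ha
  have := dist_eq_one_iff_adj.mpr hb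
  have := dist_comm (G := G) (u := b) (v := m)
  have := dist_comm (G := G) (u := b') (v := m)
  have := hconn.dist_triangle (u := a) (v := a') (w := m)
  have := hconn.dist_triangle (u := b) (v := b') (w := m)
  have := hconn.dist_triangle (u := a) (v := m) (w := b)
  have := hconn.dist_triangle (u := a) (v := m) (w := c)
  have := hconn.dist_triangle (u := b) (v := m) (w := c)
  refine ⟨?_, ?_, ?_⟩ <;> omega

variable {x y z : V}

theorem mem_halfspace : z ∈ G.halfspace x y ↔ G.dist z y = G.dist z x + 1 := Iff.rfl

theorem mem_halfspace_left (hxy : G.Adj x y) : x ∈ G.halfspace x y := by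
  simp [mem_halfspace, hxy]

theorem notMem_halfspace_swap (hz : z ∈ G.halfspace x y) : z ∉ G.halfspace y x := by
  rw [mem_halfspace] at *
  omega

theorem Adj.dist_add_one_of_mem_halfspace {z' : V} (hconn : G.Connected) (hzz' : G.Adj z z')
    (hz : z ∈ G.halfspace x y) (hz' : z' ∈ G.halfspace y x) : G.dist z' y + 1 = G.dist z y := by
  rw [mem_halfspace] at hz hz'
  have := dist_eq_one_iff_adj.mpr hzz'
  have := dist_eq_one_iff_adj.mpr hzz'.symm
  have := hconn.dist_triangle (u := z') (v := z) (w := x)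
  have := hconn.dist_triangle (u := z) (v := z') (w := y)
  omega

theorem edgeHyperplane_swap : G.edgeHyperplane (y, x) = G.edgeHyperplane (x, y) := by
  ext f
  simp only [edgeHyperplane, Theta, Set.mem_ofPred_eq]
  exact and_congr_right fun _ => by omega

theorem swap_mem_edgeHyperplane {e : V × V} {p q : V} (h : (p, q) ∈ G.edgeHyperplane e) :
    (q, p) ∈ G.edgeHyperplane e :=
  ⟨h.1.symm, by have := h.2; simp only [Theta] at *; omega⟩

end SimpleGraph

namespace IsMedianGraph

open SimpleGraph

variable {G : SimpleGraph V} {p q r x y z : V}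

theorem mem_halfspace_or (hG : IsMedianGraph G) (hxy : G.Adj x y) (z : V) :
    z ∈ G.halfspace x y ∨ z ∈ G.halfspace y x := by
  obtain ⟨m, ⟨hm₁, hm₂, hm₃⟩, -⟩ := hG.2 x y z
  have hx := dist_eq_one_iff_adj.mpr hxy
  have hy := dist_eq_one_iff_adj.mpr hxy.symm
  rw [mem_halfspace, mem_halfspace, dist_comm (u := z) (v := x), dist_comm (u := z) (v := y)]
  rcases Nat.eq_zero_or_pos (G.dist x m) with hxm | hxm
  · obtain rfl := hG.1.dist_eq_zero_iff.mp hxm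
    omega
  · obtain rfl := hG.1.dist_eq_zero_iff.mp (show G.dist m y = 0 by omega)
    omega

theorem notMem_halfspace_iff (hG : IsMedianGraph G) (hxy : G.Adj x y) :
    z ∉ G.halfspace x y ↔ z ∈ G.halfspace y x :=
  ⟨(hG.mem_halfspace_or hxy z).resolve_left, notMem_halfspace_swap⟩

theorem mem_edgeHyperplane (hG : IsMedianGraph G) (hxy : G.Adj x y) :
    (p, q) ∈ G.edgeHyperplane (x, y) ↔
      G.Adj p q ∧ (p ∈ G.halfspace x y ↔ q ∈ G.halfspace y x) := by
  refine and_congr_right fun _ => ?_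
  simp only [Theta, mem_halfspace, dist_comm (u := x), dist_comm (u := y)]
  rcases hG.mem_halfspace_or hxy p with hp | hp <;>
    rcases hG.mem_halfspace_or hxy q with hq | hq <;>
    rw [mem_halfspace] at hp hq <;> omega

theorem mem_edgeHyperplane_self (hG : IsMedianGraph G) (hxy : G.Adj x y) :
    (x, y) ∈ G.edgeHyperplane (x, y) :=
  (hG.mem_edgeHyperplane hxy).2 ⟨hxy, iff_of_true (mem_halfspace_left hxy)
    (mem_halfspace_left hxy.symm)⟩

theorem exists_adj_adj_dist_add_two (hG : IsMedianGraph G) (hrp : G.Adj r p) (hrq : G.Adj r q)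
    (hpq : p ≠ q) (hp : z ∈ G.halfspace p r) (hq : z ∈ G.halfspace q r) :
    ∃ s, G.Adj p s ∧ G.Adj q s ∧ G.dist z r = G.dist z s + 2 := by
  rw [mem_halfspace] at hp hq
  have hpr₁ := dist_eq_one_iff_adj.mpr hrp.symm
  have hrq₁ := dist_eq_one_iff_adj.mpr hrq
  have hpq₂ : G.dist p q = 2 := by
    have := hG.1.dist_triangle (u := p) (v := r) (w := q)
    have hnadj : ¬ G.Adj p q := fun h ↦ by
      rcases hG.mem_halfspace_or h z with h' | h' <;> rw [mem_halfspace] at h' <;> omega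
    have := hG.1.one_lt_dist_of_ne_of_not_adj hpq hnadj
    omega
  obtain ⟨s, ⟨hs₁, hs₂, hs₃⟩, -⟩ := hG.2 p q z
  have := dist_comm (G := G) (u := z) (v := p)
  have := dist_comm (G := G) (u := z) (v := q)
  have := dist_comm (G := G) (u := z) (v := s)
  have := dist_comm (G := G) (u := q) (v := s)
  have hps : G.dist p s = 1 := by omega
  have hqs : G.dist q s = 1 := by omega
  exact ⟨s, dist_eq_one_iff_adj.mp hps, dist_eq_one_iff_adj.mp hqs, by omega⟩

theorem mem_halfspace_of_isMedian {z₁ z₂ m : V} (hG : IsMedianGraph G) (hxy : G.Adj x y)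
    (h₁ : z₁ ∈ G.halfspace x y) (h₂ : z₂ ∈ G.halfspace x y) (hm : G.IsMedian z₁ z₂ y m) :
    m ∈ G.halfspace x y := by
  obtain ⟨q, ⟨hq₁, hq₂, hq₃⟩, -⟩ := hG.2 z₁ z₂ x
  rw [mem_halfspace] at h₁ h₂ ⊢
  have := dist_eq_one_iff_adj.mpr hxy
  have := hG.1.dist_triangle (u := q) (v := x) (w := y)
  have := hG.1.dist_triangle (u := z₁) (v := q) (w := y)
  have := hG.1.dist_triangle (u := z₂) (v := q) (w := y)
  obtain ⟨_, -, huniq⟩ := hG.2 z₁ z₂ y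
  obtain rfl : m = q := (huniq m hm).trans (huniq q ⟨hq₁, by omega, by omega⟩).symm
  omega

theorem isConvex_halfspace (hG : IsMedianGraph G) (hxy : G.Adj x y) :
    G.IsConvex (G.halfspace x y) := by
  intro z₁ h₁ z₂ h₂ μ hμ
  induction hk : G.dist z₁ z₂ using Nat.strong_induction_on generalizing x y z₁ z₂ μ with
  | _ k ih =>
  by_contra hμx
  rw [hG.notMem_halfspace_iff hxy] at hμx
  have hconn := hG.1
  obtain ⟨z₁', hz₁, hd₁⟩ := hconn.exists_adj_dist_add_one (u := z₁) (v := μ)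
    (fun h ↦ notMem_halfspace_swap h₁ (h ▸ hμx))
  obtain ⟨z₂', hz₂, hd₂⟩ := hconn.exists_adj_dist_add_one (u := z₂) (v := μ)
    (fun h ↦ notMem_halfspace_swap h₂ (h ▸ hμx))
  have := dist_eq_one_iff_adj.mpr hz₁
  have := dist_eq_one_iff_adj.mpr hz₂.symm
  have := dist_comm (G := G) (u := μ) (v := z₂)
  have := dist_comm (G := G) (u := μ) (v := z₂')
  have := hconn.dist_triangle (u := z₁) (v := z₁') (w := z₂)
  have := hconn.dist_triangle (u := z₁') (v := μ) (w := z₂)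
  have := hconn.dist_triangle (u := z₁) (v := z₂') (w := z₂)
  have := hconn.dist_triangle (u := z₁) (v := μ) (w := z₂')
  have := hconn.dist_triangle (u := z₁') (v := μ) (w := z₂')
  have := hconn.dist_triangle (u := z₁) (v := z₁') (w := z₂')
  -- by minimality of `k`, the first and the last edge of a geodesic through `μ` cross over
  have h₁' : z₁' ∈ G.halfspace y x := by
    rw [← hG.notMem_halfspace_iff hxy]
    exact fun h ↦ notMem_halfspace_swap (ih _ (by omega) hxy z₁' h z₂ h₂ μ (by omega) rfl) hμx
  have h₂' : z₂' ∈ G.halfspace y x := by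
    rw [← hG.notMem_halfspace_iff hxy]
    exact fun h ↦ notMem_halfspace_swap (ih _ (by omega) hxy z₁ h₁ z₂' h μ (by omega) rfl) hμx
  obtain ⟨m, hm, -⟩ := hG.2 z₁' z₂' y
  have hmy : m ∈ G.halfspace y x := ih _ (by omega) hxy.symm z₁' h₁' z₂' h₂' m hm.1 rfl
  -- so the median of `z₁'`, `z₂'`, `y` is also a median of `z₁`, `z₂`, `y`, on the wrong side
  have hm' : G.IsMedian z₁ z₂ y m := IsMedian.of_adj hconn hm hz₁ hz₂ (by omega)
    (hz₁.dist_add_one_of_mem_halfspace hconn h₁ h₁')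
    (hz₂.dist_add_one_of_mem_halfspace hconn h₂ h₂')
  exact notMem_halfspace_swap (hG.mem_halfspace_of_isMedian hxy h₁ h₂ hm') hmy

theorem halfspace_eq (hG : IsMedianGraph G) (hxy : G.Adj x y) (hpq : G.Adj p q)
    (hp : p ∈ G.halfspace x y) (hq : q ∈ G.halfspace y x) :
    G.halfspace p q = G.halfspace x y := by
  have hpq₁ := dist_eq_one_iff_adj.mpr hpq
  have hqp₁ := dist_eq_one_iff_adj.mpr hpq.symm
  ext z
  constructor
  · intro hz
    by_contra hzx
    rw [hG.notMem_halfspace_iff hxy] at hzx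
    refine notMem_halfspace_swap hp (hG.isConvex_halfspace hxy.symm z hzx q hq p ?_)
    rw [mem_halfspace] at hz
    omega
  · intro hz
    by_contra hzp
    rw [hG.notMem_halfspace_iff hpq, mem_halfspace] at hzp
    exact notMem_halfspace_swap (hG.isConvex_halfspace hxy z hz p hp q (by omega)) hq

theorem edgeHyperplane_eq_of_mem (hG : IsMedianGraph G) (hxy : G.Adj x y)
    (h : (p, q) ∈ G.edgeHyperplane (x, y)) : G.edgeHyperplane (p, q) = G.edgeHyperplane (x, y) := by
  obtain ⟨hpq, hside⟩ := (hG.mem_edgeHyperplane hxy).1 h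
  ext ⟨r, s⟩
  rcases hG.mem_halfspace_or hxy p with hp | hp
  · have hq := hside.1 hp
    rw [hG.mem_edgeHyperplane hpq, hG.mem_edgeHyperplane hxy, hG.halfspace_eq hxy hpq hp hq,
      hG.halfspace_eq hxy.symm hpq.symm hq hp]
  · have hq : q ∈ G.halfspace x y := by
      rw [← hG.notMem_halfspace_iff hxy.symm]
      exact fun hq ↦ notMem_halfspace_swap (hside.2 hq) hp
    rw [← edgeHyperplane_swap (x := x), hG.mem_edgeHyperplane hpq, hG.mem_edgeHyperplane hxy.symm,
      hG.halfspace_eq hxy.symm hpq hp hq, hG.halfspace_eq hxy hpq.symm hq hp]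

end IsMedianGraph

namespace IsHyperplane

open SimpleGraph

variable {G : SimpleGraph V} {h : Set (V × V)} {p q : V}

theorem adj_of_mem (hh : IsHyperplane G h) (he : (p, q) ∈ h) : G.Adj p q := by
  obtain ⟨e, -, rfl⟩ := hh
  exact he.1

theorem swap_mem (hh : IsHyperplane G h) (he : (p, q) ∈ h) : (q, p) ∈ h := by
  obtain ⟨e, -, rfl⟩ := hh
  exact swap_mem_edgeHyperplane he

theorem eq_edgeHyperplane (hh : IsHyperplane G h) (hG : IsMedianGraph G) (he : (p, q) ∈ h) :
    h = G.edgeHyperplane (p, q) := by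
  obtain ⟨⟨x, y⟩, hxy, rfl⟩ := hh
  exact (hG.edgeHyperplane_eq_of_mem hxy he).symm

end IsHyperplane

namespace IsMedianGraph

open SimpleGraph

variable {G : SimpleGraph V} {a b c d p q v v' x z : V}

theorem exists_adj_subset_halfspace (hG : IsMedianGraph G) {S : Set V} (hS : G.IsConvex S)
    (hne : S.Nonempty) (hv : v ∉ S) : ∃ x, G.Adj v x ∧ S ⊆ G.halfspace x v := by
  obtain ⟨p, hpS, hpmin⟩ := exists_minimalFor_of_wellFoundedLT (· ∈ S) (G.dist v) hne
  obtain ⟨x, hvx, hxp⟩ := hG.1.exists_adj_dist_add_one (fun h : v = p ↦ hv (h ▸ hpS))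
  refine ⟨x, hvx, fun z hz ↦ ?_⟩
  -- the median of `v`, `p`, `z` lies in `S`, so by minimality `p` is on a geodesic from `v` to `z`
  obtain ⟨m, ⟨hm₁, hm₂, hm₃⟩, -⟩ := hG.2 v p z
  have hmin := hpmin (hS p hpS z hz m hm₃) (by omega)
  have := dist_comm (G := G) (u := m) (v := p)
  have := hG.1.dist_triangle (u := x) (v := p) (w := z)
  have := dist_comm (G := G) (u := z) (v := v)
  have := dist_comm (G := G) (u := z) (v := x)
  refine (hG.mem_halfspace_or hvx.symm z).resolve_right fun hzv ↦ ?_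
  rw [mem_halfspace] at hzv
  omega

theorem not_transverse_of_halfspace_subset (hG : IsMedianGraph G) (hab : G.Adj a b)
    (hpq : G.Adj p q) (hne : G.edgeHyperplane (p, q) ≠ G.edgeHyperplane (a, b))
    (hsub : G.halfspace b a ⊆ G.halfspace q p) :
    ¬ Transverse G (G.edgeHyperplane (a, b)) (G.edgeHyperplane (p, q)) := by
  rintro ⟨A, B, C, D, hAB, -, hAC, hBD, -⟩
  have hsplit : ∀ {r s}, (r, s) ∈ G.edgeHyperplane (p, q) → r ∈ G.halfspace b a →
      s ∉ G.halfspace b a := by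
    intro r s hrs hr hs
    exact notMem_halfspace_swap (hsub hr) (((hG.mem_edgeHyperplane hpq).1 hrs).2.2 (hsub hs))
  have hkeep : ∀ {r s}, (r, s) ∈ G.edgeHyperplane (p, q) → r ∈ G.halfspace b a →
      s ∈ G.halfspace b a := by
    intro r s hrs hr
    by_contra hs
    rw [hG.notMem_halfspace_iff hab.symm] at hs
    have hrs' : (r, s) ∈ G.edgeHyperplane (b, a) :=
      (hG.mem_edgeHyperplane hab.symm).2 ⟨hrs.1, iff_of_true hr hs⟩
    rw [edgeHyperplane_swap] at hrs'
    exact hne ((hG.edgeHyperplane_eq_of_mem hpq hrs).symm.trans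
      (hG.edgeHyperplane_eq_of_mem hab hrs'))
  by_cases hA : A ∈ G.halfspace b a
  · exact hsplit hAC hA (hkeep hAC hA)
  · rw [hG.notMem_halfspace_iff hab.symm] at hA
    have hB := ((hG.mem_edgeHyperplane hab).1 hAB).2.1 hA
    exact hsplit hBD hB (hkeep hBD hB)

theorem transverse_edgeHyperplane (hG : IsMedianGraph G) (hvv' : G.Adj v v') (hvx : G.Adj v x)
    (hx : x ∈ G.halfspace v v') (hz : z ∈ G.halfspace v' v) (hzx : z ∈ G.halfspace x v) :
    Transverse G (G.edgeHyperplane (v, x)) (G.edgeHyperplane (v, v')) := by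
  have hxv' : x ≠ v' := by
    rintro rfl
    exact notMem_halfspace_swap hx (mem_halfspace_left hvv'.symm)
  obtain ⟨s, hxs, hv's, hzs⟩ := hG.exists_adj_adj_dist_add_two hvx hvv' hxv' hzx hz
  have hs : s ∈ G.halfspace v' v := by
    refine hG.isConvex_halfspace hvv'.symm v' (mem_halfspace_left hvv'.symm) z hz s ?_
    rw [mem_halfspace] at hz
    have := dist_eq_one_iff_adj.mpr hv's
    have := dist_comm (G := G) (u := z) (v := v')
    have := dist_comm (G := G) (u := z) (v := s)
    omega
  have hv'x : v' ∈ G.halfspace v x := by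
    refine (hG.mem_halfspace_or hvx v').resolve_right fun h ↦ hxv' ?_
    rw [mem_halfspace, dist_eq_one_iff_adj.mpr hvv'.symm] at h
    exact (hG.1.dist_eq_zero_iff.mp (by omega)).symm
  have hsx : s ∈ G.halfspace x v := by
    refine (hG.mem_halfspace_or hvx s).resolve_left fun h ↦ ?_
    rw [mem_halfspace, dist_eq_one_iff_adj.mpr hxs.symm] at h
    rw [hG.1.dist_eq_zero_iff.mp (show G.dist s v = 0 by omega)] at hzs
    omega
  refine ⟨v, x, v', s, hG.mem_edgeHyperplane_self hvx, ?_, hG.mem_edgeHyperplane_self hvv', ?_,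
    hvx, hv's, hvv', hxs⟩
  · exact (hG.mem_edgeHyperplane hvx).2 ⟨hv's, iff_of_true hv'x hsx⟩
  · exact (hG.mem_edgeHyperplane hvv').2 ⟨hxs, iff_of_true hx hs⟩

theorem exists_transverse_not_transverse (hG : IsMedianGraph G) {u w : Set (V × V)}
    (hu : IsHyperplane G u) (hw : IsHyperplane G w) (hab : (a, b) ∈ u) (hcd : (c, d) ∈ u)
    (hac : (a, c) ∈ w) (hbd : (b, d) ∈ w) (hvv' : (v, v') ∈ w) (hvu : ¬ AdjTo G u v)
    (hva : v ∈ G.halfspace a b) :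
    ∃ t, IsHyperplane G t ∧ Transverse G t w ∧ ¬ Transverse G u t := by
  have hab_adj := hu.adj_of_mem hab
  have hvv'_adj := hw.adj_of_mem hvv'
  obtain rfl := hu.eq_edgeHyperplane hG hab
  obtain rfl := hw.eq_edgeHyperplane hG hvv'
  have hc : c ∈ G.halfspace a b := by
    by_contra hc
    rw [hG.notMem_halfspace_iff hab_adj] at hc
    have hacu : (a, c) ∈ G.edgeHyperplane (a, b) :=
      (hG.mem_edgeHyperplane hab_adj).2 ⟨hac.1, iff_of_true (mem_halfspace_left hab_adj) hc⟩
    have huw := (hG.edgeHyperplane_eq_of_mem hvv'_adj hac).symm.trans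
      (hG.edgeHyperplane_eq_of_mem hab_adj hacu)
    exact hvu ⟨(v, v'), huw ▸ hvv', Or.inl rfl⟩
  have hb : b ∈ G.halfspace b a := mem_halfspace_left hab_adj.symm
  have hd : d ∈ G.halfspace b a := ((hG.mem_edgeHyperplane hab_adj).1 hcd).2.1 hc
  obtain ⟨x, hvx, hsub⟩ := hG.exists_adj_subset_halfspace (hG.isConvex_halfspace hab_adj.symm)
    ⟨b, hb⟩ (notMem_halfspace_swap hva)
  obtain ⟨z, z', hz, hz', hzw, hz'w⟩ : ∃ z z', z ∈ G.halfspace b a ∧ z' ∈ G.halfspace b a ∧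
      z ∈ G.halfspace v' v ∧ z' ∈ G.halfspace v v' := by
    have hbd' := ((hG.mem_edgeHyperplane hvv'_adj).1 hbd).2
    by_cases hbw : b ∈ G.halfspace v v'
    · exact ⟨d, b, hd, hb, hbd'.1 hbw, hbw⟩
    · rw [hG.notMem_halfspace_iff hvv'_adj] at hbw
      refine ⟨b, d, hb, hd, hbw, ?_⟩
      rw [← hG.notMem_halfspace_iff hvv'_adj.symm]
      exact fun hdw ↦ notMem_halfspace_swap hbw (hbd'.2 hdw)
  have hx : x ∈ G.halfspace v v' := by
    by_contra hx
    rw [hG.notMem_halfspace_iff hvv'_adj] at hx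
    rw [← hG.halfspace_eq hvv'_adj hvx (mem_halfspace_left hvv'_adj) hx] at hz'w
    exact notMem_halfspace_swap (hsub hz') hz'w
  refine ⟨G.edgeHyperplane (v, x), ⟨(v, x), hvx, rfl⟩,
    hG.transverse_edgeHyperplane hvv'_adj hvx hx hzw (hsub hz),
    hG.not_transverse_of_halfspace_subset hab_adj hvx (fun htu ↦ ?_) hsub⟩
  exact hvu ⟨(v, x), htu ▸ hG.mem_edgeHyperplane_self hvx, Or.inl rfl⟩

end IsMedianGraph

theorem not_mem_Ical_general (G : SimpleGraph V) (hG : IsMedianGraph G)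
    (w u : Set (V × V)) (hw : IsHyperplane G w) (hu : IsHyperplane G u)
    (hnot : u ∉ Ical G w) :
    ¬ Transverse G u w ∨ ∃ t, IsHyperplane G t ∧ Transverse G t w ∧ ¬ Transverse G u t := by
  rw [or_iff_not_imp_left, not_not]
  rintro ⟨a, b, c, d, hab, hcd, hac, hbd, -⟩
  obtain ⟨v, hvw, hvu⟩ : ∃ v, AdjTo G w v ∧ ¬ AdjTo G u v := by
    simpa [Ical, hu] using hnot
  obtain ⟨v', hvv'⟩ : ∃ v', (v, v') ∈ w := by
    obtain ⟨⟨p, q⟩, he, rfl | rfl⟩ := hvw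
    · exact ⟨q, he⟩
    · exact ⟨p, hw.swap_mem he⟩
  rcases hG.mem_halfspace_or (hu.adj_of_mem hab) v with hva | hvb
  · exact hG.exists_transverse_not_transverse hu hw hab hcd hac hbd hvv' hvu hva
  · exact hG.exists_transverse_not_transverse hu hw (hu.swap_mem hab) (hu.swap_mem hcd) hbd hac
      hvv' hvu hvb

/-- if `u ∉ I(w)` but `u` is in contact with `w`, then either `u` is not
transverse to `w`, or some hyperplane `t` transverse to `w` is not transverse to `u`. -/
theorem not_mem_Ical (G : SimpleGraph V) (hG : IsMedianGraph G)
    (hdim : ∃ n : ℕ, ∀ S : Finset (Set (V × V)), (∀ h ∈ S, IsHyperplane G h) →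
      (S : Set (Set (V × V))).Pairwise (Transverse G) → S.card ≤ n)
    (w u : Set (V × V)) (hw : IsHyperplane G w) (hu : IsHyperplane G u)
    (hnot : u ∉ Ical G w) (hc : Contact G u w) :
    ¬ Transverse G u w ∨ ∃ t, IsHyperplane G t ∧ Transverse G t w ∧ ¬ Transverse G u t :=
  not_mem_Ical_general G hG w u hw hu hnot
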